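/- For every λ > 0 and every T > 0, 4(λπ)² ∫₀^∞ y · e^{−λπ y² (√T arctan(√T) + 1)} · (∫₀^y x/(1 + T y⁴ x^{-4}) dx) dy = (1 − √T arctan(1/√T)) / (1 + √T arctan(√T))². -/

import Mathlib

open Real MeasureTheory Set

/-! With `b = √T y²` the inner integrand is `x⁵ / (x⁴ + b²)`, whose antiderivative is
`x²/2 - (b/2) arctan (x²/b)`; hence the inner integral equals `y²/2 · (1 - √T arctan (1/√T))`,
and the outer integral reduces to the Gamma integral `∫₀^∞ y³ e^{-a y²} dy = 1 / (2a²)`. -/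

lemma div_one_add_mul_zpow_neg_four (c x : ℝ) :
    x / (1 + c * x ^ (-4 : ℤ)) = x ^ 5 / (x ^ 4 + c) := by
  rcases eq_or_ne x 0 with rfl | hx
  · simp
  · rw [zpow_neg, zpow_ofNat, ← div_eq_mul_inv, one_add_div (by positivity), div_div_eq_mul_div,
      ← pow_succ']

lemma hasDerivAt_sq_div_two_sub_mul_arctan {b : ℝ} (hb : b ≠ 0) (x : ℝ) :
    HasDerivAt (fun x ↦ x ^ 2 / 2 - b / 2 * arctan (x ^ 2 / b)) (x ^ 5 / (x ^ 4 + b ^ 2)) x := by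
  refine (((hasDerivAt_pow 2 x).div_const 2).fun_sub
    (((hasDerivAt_pow 2 x).div_const b).arctan.const_mul (b / 2))).congr_deriv ?_
  have : x ^ 4 + b ^ 2 ≠ 0 := by positivity
  field_simp
  ring

lemma integral_pow_five_div_pow_four_add_sq {b : ℝ} (hb : b ≠ 0) (y : ℝ) :
    ∫ x in (0 : ℝ)..y, x ^ 5 / (x ^ 4 + b ^ 2) = y ^ 2 / 2 - b / 2 * arctan (y ^ 2 / b) := by
  have hcont : Continuous fun x : ℝ ↦ x ^ 5 / (x ^ 4 + b ^ 2) := by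
    fun_prop (disch := intro x; positivity)
  rw [intervalIntegral.integral_eq_sub_of_hasDerivAt
    (fun x _ ↦ hasDerivAt_sq_div_two_sub_mul_arctan hb x) (hcont.intervalIntegrable 0 y)]
  simp

lemma integral_Ioi_pow_three_mul_exp_neg_mul_sq {a : ℝ} (ha : 0 < a) :
    ∫ y in Ioi 0, y ^ 3 * exp (-(a * y ^ 2)) = 1 / (2 * a ^ 2) := by
  have h := integral_rpow_mul_exp_neg_mul_rpow two_pos (by norm_num : (-1 : ℝ) < 3) ha
  norm_num [Gamma_two] at h
  rw [h]
  ring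

lemma integral_div_one_add_mul_pow_four_mul_zpow_neg_four {T : ℝ} (hT : 0 < T) {y : ℝ}
    (hy : y ≠ 0) :
    ∫ x in (0 : ℝ)..y, x / (1 + T * y ^ 4 * x ^ (-4 : ℤ))
      = y ^ 2 / 2 * (1 - √T * arctan (1 / √T)) := by
  have hb : √T * y ^ 2 ≠ 0 := by positivity
  have hsq : T * y ^ 4 = (√T * y ^ 2) ^ 2 := by rw [mul_pow, sq_sqrt hT.le]; ring
  have harg : y ^ 2 / (√T * y ^ 2) = 1 / √T := by field_simp
  simp_rw [div_one_add_mul_zpow_neg_four, hsq, integral_pow_five_div_pow_four_add_sq hb, harg]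
  ring

/-- Theorem 1, blackout case at η = 4 (interference-limited):
`C_bk = (1 − √T arctan(1/√T)) / (1 + √T arctan √T)²`. -/
theorem stmt_10 (lam T : ℝ) (hlam : 0 < lam) (hT : 0 < T) :
    4 * (lam * π) ^ 2 *
      ∫ y in Set.Ioi (0:ℝ),
        y * Real.exp (-(lam * π * y ^ 2 * (Real.sqrt T * Real.arctan (Real.sqrt T) + 1))) *
          ∫ x in (0:ℝ)..y, x / (1 + T * y ^ 4 * x ^ (-4 : ℤ))
      = (1 - Real.sqrt T * Real.arctan (1 / Real.sqrt T)) /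
          (1 + Real.sqrt T * Real.arctan (Real.sqrt T)) ^ 2 := by
  set s := √T * arctan √T + 1
  set c := 1 - √T * arctan (1 / √T)
  have hs : 0 < s := by have := arctan_pos.2 (sqrt_pos.2 hT); positivity
  calc _ = 4 * (lam * π) ^ 2 * ∫ y in Ioi 0, c / 2 * (y ^ 3 * exp (-(lam * π * s * y ^ 2))) := by
        congr 1
        refine setIntegral_congr_fun measurableSet_Ioi fun y hy ↦ ?_
        rw [integral_div_one_add_mul_pow_four_mul_zpow_neg_four hT hy.ne', mul_right_comm _ (y ^ 2)]
        ring
    _ = 4 * (lam * π) ^ 2 * (c / 2 * (1 / (2 * (lam * π * s) ^ 2))) := by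
        rw [integral_const_mul, integral_Ioi_pow_three_mul_exp_neg_mul_sq (by positivity)]
    _ = c / s ^ 2 := by
        field_simp
        ring
    _ = c / (1 + √T * arctan √T) ^ 2 := by rw [add_comm]
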